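/- Let q be a power of an odd prime, and let λ ∈ 𝔽_q be such that λ ≠ −(u² + u) for every u ∈ 𝔽_q. Set f(Y₀,Y₁) = Y₀^{q+1} − Y₀ Y₁^q + λ Y₁^{q+1}. Then the symmetric curve C_{f,f}, defined by F = f(Y₀,Y₁)·(X₀^q X₁ − X₀ X₁^q) + f(X₀,X₁)·(Y₀^q Y₁ − Y₀ Y₁^q), is smooth: there is no point ((α₀,α₁),(β₀,β₁)) with (α₀,α₁),(β₀,β₁) ∈ K² \ {(0,0)} (K the algebraic closure of 𝔽_q) at which F and all four partial derivatives F_{X₀}, F_{X₁}, F_{Y₀}, F_{Y₁} vanish simultaneously. -/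

import Mathlib

/-!
At a singular point `α₁` and `β₁` are nonzero, so we may dehomogenise to `a = α₀/α₁`, `b = β₀/β₁`.
The two `X`-partials then give `b^q ≠ b` and make `s = a^q` a root of `z² - z + λ`; by symmetry
`a^q ≠ a` and `t = b^q` is a root as well. The hypothesis on `λ` says exactly that this quadratic
has no root in `𝔽_q`, so Frobenius swaps its roots: `s^q = 1 - s`. If `t = 1 - s`, the
`Y₀`-partial forces `a = s`, contradicting `a^q ≠ a`. If `t = s`, it forces `(s - 1) a = -λ`
(here `2 ≠ 0` is used); applying Frobenius gives `s² = λ`, hence `s = 2λ ∈ 𝔽_q`, again absurd.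
-/

open MvPolynomial

theorem FiniteField.mem_range_algebraMap_of_pow_card_eq {F K : Type*} [Field F] [Fintype F]
    [Field K] [Algebra F K] {x : K} (hx : x ^ Fintype.card F = x) :
    x ∈ (algebraMap F K).range := by
  have hq := Fintype.one_lt_card (α := F)
  have hsplit : (Polynomial.X ^ Fintype.card F - Polynomial.X : Polynomial F).Splits := by
    rw [Polynomial.splits_iff_card_roots, FiniteField.roots_X_pow_card_sub_X,
      FiniteField.X_pow_card_sub_X_natDegree_eq F hq]
    rfl
  exact hsplit.mem_range_of_isRoot (FiniteField.X_pow_card_sub_X_ne_zero F hq) (by simp [hx])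

theorem FiniteField.sq_sub_self_add_algebraMap_ne_zero {F K : Type*} [Field F] [Fintype F]
    [Field K] [Algebra F K] {lam : F} (hlam : ∀ u : F, lam ≠ -(u ^ 2 + u)) {x : K}
    (hx : x ^ Fintype.card F = x) : x ^ 2 - x + algebraMap F K lam ≠ 0 := by
  intro hroot
  obtain ⟨u, rfl⟩ := mem_range_algebraMap_of_pow_card_eq hx
  refine hlam (-u) ((algebraMap F K).injective ?_)
  simp only [map_neg, map_add, map_pow]
  linear_combination hroot

theorem two_ne_zero_of_odd_of_natCast_eq_zero {R : Type*} [Ring R] [Nontrivial R] {m : ℕ}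
    (hm : Odd m) (h : (m : R) = 0) : (2 : R) ≠ 0 := by
  obtain ⟨k, rfl⟩ := hm
  push_cast at h
  intro h2
  rw [h2, zero_mul, zero_add] at h
  exact one_ne_zero h

section Partials

variable {R K : Type*} [CommRing R] [CommRing K] [Algebra R K]

noncomputable def spaceFillingPoly (q : ℕ) (f g : MvPolynomial (Fin 2) R) :
    MvPolynomial (Fin 4) R :=
  aeval ![(X 2 : MvPolynomial (Fin 4) R), X 3] f * (X 0 ^ q * X 1 - X 0 * X 1 ^ q)
    + aeval ![(X 0 : MvPolynomial (Fin 4) R), X 1] g * (X 2 ^ q * X 3 - X 2 * X 3 ^ q)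

/-- `∂F/∂X₀` and `∂F/∂X₁` for `F = spaceFillingPoly q f f`, `f = Y₀^{q+1} - Y₀ Y₁^q + μ Y₁^{q+1}`,
vanish at `((α₀, α₁), (β₀, β₁))`, computed with `q = 0` in `K`. As `F` is symmetric, the
`Y`-partials vanish iff the same holds at `((β₀, β₁), (α₀, α₁))`. -/
def XPartialsVanish (q : ℕ) (μ α₀ α₁ β₀ β₁ : K) : Prop :=
  -(β₀ ^ (q + 1) - β₀ * β₁ ^ q + μ * β₁ ^ (q + 1)) * α₁ ^ q
      + (α₀ ^ q - α₁ ^ q) * (β₀ ^ q * β₁ - β₀ * β₁ ^ q) = 0 ∧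
    (β₀ ^ (q + 1) - β₀ * β₁ ^ q + μ * β₁ ^ (q + 1)) * α₀ ^ q
      + μ * α₁ ^ q * (β₀ ^ q * β₁ - β₀ * β₁ ^ q) = 0

theorem xPartialsVanish_of_aeval_pderiv_eq_zero {q : ℕ} (hq : (q : K) = 0) (lam : R)
    {α₀ α₁ β₀ β₁ : K}
    (h : ∀ i, aeval ![α₀, α₁, β₀, β₁] (pderiv i (spaceFillingPoly q
      (X 0 ^ (q + 1) - X 0 * X 1 ^ q + C lam * X 1 ^ (q + 1))
      (X 0 ^ (q + 1) - X 0 * X 1 ^ q + C lam * X 1 ^ (q + 1)))) = 0) :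
    XPartialsVanish q (algebraMap R K lam) α₀ α₁ β₀ β₁ ∧
      XPartialsVanish q (algebraMap R K lam) β₀ β₁ α₀ α₁ := by
  have h₀ := h 0
  have h₁ := h 1
  have h₂ := h 2
  have h₃ := h 3
  simp only [spaceFillingPoly, map_add, map_sub, map_mul, map_pow, map_one, map_natCast,
    Derivation.leibniz, Derivation.leibniz_pow, derivation_C, pderiv_X, Pi.single_apply,
    aeval_X, algHom_C, algebraMap_eq, Matrix.cons_val_zero, Matrix.cons_val_one,
    Matrix.cons_val, Matrix.cons_val_fin_one, Fin.reduceEq, if_true, if_false, smul_eq_mul,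
    nsmul_eq_mul, Nat.cast_add, Nat.cast_one, add_tsub_cancel_right, hq, map_zero, zero_mul,
    mul_zero, zero_add, add_zero, mul_one, one_mul] at h₀ h₁ h₂ h₃
  exact ⟨⟨by linear_combination h₀, by linear_combination h₁⟩,
    by linear_combination h₂, by linear_combination h₃⟩

end Partials

section Affine

variable {K : Type*} [Field K] {q : ℕ} {μ : K}

namespace XPartialsVanish

variable {α₀ α₁ β₀ β₁ a b : K}

theorem snd_ne_zero (h : XPartialsVanish q μ α₀ α₁ β₀ β₁) (hq : q ≠ 0)
    (hα : (α₀, α₁) ≠ (0, 0)) (hβ : (β₀, β₁) ≠ (0, 0)) : β₁ ≠ 0 := by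
  rintro rfl
  have hβ₀ : β₀ ^ (q + 1) ≠ 0 := pow_ne_zero _ (by simpa using hβ)
  obtain ⟨h₀, h₁⟩ := h
  rw [zero_pow hq, zero_pow (Nat.succ_ne_zero q)] at h₀ h₁
  have hα₁ : β₀ ^ (q + 1) * α₁ ^ q = 0 := by linear_combination -h₀
  have hα₀ : β₀ ^ (q + 1) * α₀ ^ q = 0 := by linear_combination h₁
  simp only [mul_eq_zero, hβ₀, false_or, pow_eq_zero_iff hq] at hα₀ hα₁
  exact hα (by rw [hα₀, hα₁])

theorem div (h : XPartialsVanish q μ α₀ α₁ β₀ β₁) (hα₁ : α₁ ≠ 0) (hβ₁ : β₁ ≠ 0) :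
    XPartialsVanish q μ (α₀ / α₁) 1 (β₀ / β₁) 1 := by
  have hscale : α₁ ^ q * β₁ ^ (q + 1) ≠ 0 := by positivity
  obtain ⟨h₀, h₁⟩ := h
  obtain ⟨a, rfl⟩ : ∃ a, α₀ = a * α₁ := ⟨α₀ / α₁, (div_mul_cancel₀ α₀ hα₁).symm⟩
  obtain ⟨b, rfl⟩ : ∃ b, β₀ = b * β₁ := ⟨β₀ / β₁, (div_mul_cancel₀ β₀ hβ₁).symm⟩
  rw [mul_div_cancel_right₀ a hα₁, mul_div_cancel_right₀ b hβ₁]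
  constructor <;> refine mul_left_cancel₀ hscale ?_
  · linear_combination h₀
  · linear_combination h₁

theorem pow_ne_self (h : XPartialsVanish q μ a 1 b 1)
    (hμ : ∀ x : K, x ^ q = x → x ^ 2 - x + μ ≠ 0) :
    b ^ q ≠ b := by
  intro hb
  refine hμ b hb ?_
  linear_combination (-1) * h.1 + (a ^ q - 1 - b) * hb + pow_succ b q

theorem pow_sq_sub_pow_add_eq_zero (h : XPartialsVanish q μ a 1 b 1)
    (hμ : ∀ x : K, x ^ q = x → x ^ 2 - x + μ ≠ 0) :
    (a ^ q) ^ 2 - a ^ q + μ = 0 := by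
  have hb : b ^ q - b ≠ 0 := sub_ne_zero.mpr (h.pow_ne_self hμ)
  refine (mul_eq_zero.mp ?_).resolve_left hb
  linear_combination a ^ q * h.1 + h.2

end XPartialsVanish

theorem pow_eq_one_sub_of_sq_sub_add_eq_zero (σ : K →+* K) (hσ : ∀ x, σ x = x ^ q) (hσμ : σ μ = μ)
    (hμ : ∀ x : K, x ^ q = x → x ^ 2 - x + μ ≠ 0) {s : K} (hs : s ^ 2 - s + μ = 0) :
    s ^ q = 1 - s := by
  have hσs : σ s ^ 2 - σ s + μ = 0 := by
    rw [← hσμ, ← map_pow, ← map_sub, ← map_add, hs, map_zero]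
  rw [hσ] at hσs
  have hfac : (s ^ q - s) * (s ^ q + s - 1) = 0 := by linear_combination hσs - hs
  rcases mul_eq_zero.mp hfac with hfix | hconj
  · exact absurd hs (hμ s (sub_eq_zero.mp hfix))
  · linear_combination hconj

theorem XPartialsVanish.false_of_swap (σ : K →+* K) (hσ : ∀ x, σ x = x ^ q) (hσμ : σ μ = μ)
    (h2 : (2 : K) ≠ 0) (hμ : ∀ x : K, x ^ q = x → x ^ 2 - x + μ ≠ 0) {a b : K}
    (hab : XPartialsVanish q μ a 1 b 1) (hba : XPartialsVanish q μ b 1 a 1) : False := by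
  have hs := hab.pow_sq_sub_pow_add_eq_zero hμ
  have ht := hba.pow_sq_sub_pow_add_eq_zero hμ
  have hsq := pow_eq_one_sub_of_sq_sub_add_eq_zero σ hσ hσμ hμ hs
  have hE := hba.1
  rw [one_pow, mul_one, mul_one, pow_succ] at hE
  have hfac : (b ^ q - a ^ q) * (b ^ q + a ^ q - 1) = 0 := by linear_combination ht - hs
  rcases mul_eq_zero.mp hfac with hts | hts
  · have hlin : 2 * ((a ^ q - 1) * a + μ) = 0 := by
      linear_combination hs - hE + (a ^ q - a) * hts
    have hprod : (a ^ q - 1) * a + μ = 0 := (mul_eq_zero.mp hlin).resolve_left h2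
    have hσprod := congrArg σ hprod
    rw [map_add, map_mul, map_sub, map_one, hσμ, map_zero, hσ, hσ] at hσprod
    have hsq2 : (a ^ q) ^ 2 = μ := by linear_combination a ^ q * hsq - hσprod
    have hs2μ : a ^ q = 2 * μ := by linear_combination hsq2 - hs
    exact hμ (a ^ q) (by rw [← hσ, hs2μ, map_mul, map_ofNat, hσμ]) hs
  · exact hba.pow_ne_self hμ (by linear_combination -hE - hs + (a ^ q - a) * hts)

end Affine

theorem symmetric_space_filling_curve_smooth_general
    {Fq : Type*} [Field Fq] [Fintype Fq] (p n q : ℕ)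
    (hodd : Odd p) (hq : q = p ^ n) (hcard : Fintype.card Fq = q)
    (lam : Fq) (hlam : ∀ u : Fq, lam ≠ -(u ^ 2 + u))
    (f : MvPolynomial (Fin 2) Fq)
    (hf : f = X 0 ^ (q + 1) - X 0 * X 1 ^ q + C lam * X 1 ^ (q + 1))
    (Fpoly : MvPolynomial (Fin 4) Fq)
    (hFpoly : Fpoly
      = aeval ![(X 2 : MvPolynomial (Fin 4) Fq), X 3] f
          * (X 0 ^ q * X 1 - X 0 * X 1 ^ q)
        + aeval ![(X 0 : MvPolynomial (Fin 4) Fq), X 1] f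
          * (X 2 ^ q * X 3 - X 2 * X 3 ^ q)) :
    ¬ ∃ α₀ α₁ β₀ β₁ : AlgebraicClosure Fq,
      (α₀, α₁) ≠ (0, 0) ∧ (β₀, β₁) ≠ (0, 0) ∧
      aeval ![α₀, α₁, β₀, β₁] Fpoly = 0 ∧
      ∀ i : Fin 4, aeval ![α₀, α₁, β₀, β₁] (pderiv i Fpoly) = 0 := by
  subst hf hFpoly
  rintro ⟨α₀, α₁, β₀, β₁, hα, hβ, -, hD⟩
  have hq₀ : q ≠ 0 := hcard ▸ Fintype.card_ne_zero
  have hqK : (q : AlgebraicClosure Fq) = 0 := by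
    rw [← hcard, ← map_natCast (algebraMap Fq _), FiniteField.cast_card_eq_zero, map_zero]
  have h2 := two_ne_zero_of_odd_of_natCast_eq_zero (hq ▸ hodd.pow) hqK
  let σ := (FiniteField.frobeniusAlgHom Fq (AlgebraicClosure Fq)).toRingHom
  have hσ : ∀ x, σ x = x ^ q := fun x ↦ hcard ▸ rfl
  have hσμ : σ (algebraMap Fq _ lam) = algebraMap Fq _ lam := AlgHom.commutes _ lam
  have hμ : ∀ x : AlgebraicClosure Fq, x ^ q = x → x ^ 2 - x + algebraMap Fq _ lam ≠ 0 :=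
    fun x hx ↦ FiniteField.sq_sub_self_add_algebraMap_ne_zero hlam (hcard ▸ hx)
  obtain ⟨hαβ, hβα⟩ := xPartialsVanish_of_aeval_pderiv_eq_zero hqK lam hD
  have hβ₁ := hαβ.snd_ne_zero hq₀ hα hβ
  have hα₁ := hβα.snd_ne_zero hq₀ hβ hα
  exact XPartialsVanish.false_of_swap σ hσ hσμ h2 hμ (hαβ.div hα₁ hβ₁) (hβα.div hβ₁ hα₁)

/-- Let `q` be a power of an odd prime and `λ ∈ 𝔽_q` with `λ ≠ -(u² + u)` for
every `u ∈ 𝔽_q`.  With `f(Y₀,Y₁) = Y₀^{q+1} - Y₀ Y₁^q + λ Y₁^{q+1}`, the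
symmetric space filling curve `C_{f,f}`, defined by
`F = f(Y₀,Y₁)·(X₀^q X₁ − X₀ X₁^q) + f(X₀,X₁)·(Y₀^q Y₁ − Y₀ Y₁^q)`, is smooth:
there is no point `((α₀:α₁),(β₀:β₁)) ∈ (ℙ¹×ℙ¹)(K)` (with `K` the algebraic
closure of `𝔽_q`) at which `F` and all four partial derivatives vanish.
Here the variables of `MvPolynomial (Fin 4) 𝔽_q` are `X₀ = X 0`, `X₁ = X 1`,
`Y₀ = X 2`, `Y₁ = X 3`. -/
theorem symmetric_space_filling_curve_smooth
    {Fq : Type*} [Field Fq] [Fintype Fq] (p n q : ℕ) (hp : p.Prime)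
    (hodd : Odd p) (hn : 0 < n) (hq : q = p ^ n) (hcard : Fintype.card Fq = q)
    (lam : Fq) (hlam : ∀ u : Fq, lam ≠ -(u ^ 2 + u))
    (f : MvPolynomial (Fin 2) Fq)
    (hf : f = X 0 ^ (q + 1) - X 0 * X 1 ^ q + C lam * X 1 ^ (q + 1))
    (Fpoly : MvPolynomial (Fin 4) Fq)
    (hFpoly : Fpoly
      = aeval ![(X 2 : MvPolynomial (Fin 4) Fq), X 3] f
          * (X 0 ^ q * X 1 - X 0 * X 1 ^ q)
        + aeval ![(X 0 : MvPolynomial (Fin 4) Fq), X 1] f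
          * (X 2 ^ q * X 3 - X 2 * X 3 ^ q)) :
    ¬ ∃ α₀ α₁ β₀ β₁ : AlgebraicClosure Fq,
      (α₀, α₁) ≠ (0, 0) ∧ (β₀, β₁) ≠ (0, 0) ∧
      aeval ![α₀, α₁, β₀, β₁] Fpoly = 0 ∧
      ∀ i : Fin 4, aeval ![α₀, α₁, β₀, β₁] (pderiv i Fpoly) = 0 :=
  symmetric_space_filling_curve_smooth_general p n q hodd hq hcard lam hlam f hf Fpoly hFpoly
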